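/- arXiv:0909.2326 — 8 statements merged into one kernel-verified Lean document; each statement's English description precedes it below -/
import Mathlib

section
/- Let U ⊆ ℂ be open, let g : U → ℂ and φ : U → ℂ be holomorphic and nowhere zero on U, and let F = (F₁,F₂,F₃) : U → ℂ³ be holomorphic with F₁' = (1/2)(1/g − g)·φ, F₂' = (i/2)(1/g + g)·φ and F₃' = φ on U, and set X := Re F : U → ℝ³. Then at every point of U the cross product of the partial derivatives satisfies (∂X/∂x) × (∂X/∂y) = Λ²·N, where Λ := (1/2)(|g| + 1/|g|)·|φ| and N := (2 Re g, 2 Im g, |g|² − 1)/(1 + |g|²). In particular the unit normal vector of the immersion X equals the inverse stereographic projection N of g, which lies on the unit sphere of ℝ³. -/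
/-!
Write `F' = ψ v` with `ψ = φ / 2g` and `v = (1 - g², i(1 + g²), 2g)`. Since `F` is holomorphic,
`∂X/∂x = Re F'` and `∂X/∂y = -Im F'`. Multiplication by `ψ` acts on the pair `(Re v, Im v)` as a
rotation–dilation of determinant `|ψ|²`, and the cross product is alternating bilinear, so
`∂X/∂x × ∂X/∂y = -|ψ|² (Re v × Im v)`. For this `v`, `Re v × Im v = -(1 + |g|²)(2 Re g, 2 Im g,
|g|² - 1)` is a polynomial identity in `Re g, Im g`, and `Λ² = |ψ|² (1 + |g|²)²`.
-/

open Complex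

/-- Partial derivative in the `x`-direction (direction `1 ∈ ℂ`) of a real-valued
function on `ℂ ≅ ℝ²`. -/
noncomputable def pdx (f : ℂ → ℝ) (z : ℂ) : ℝ := fderiv ℝ f z 1

/-- Partial derivative in the `y`-direction (direction `i ∈ ℂ`). -/
noncomputable def pdy (f : ℂ → ℝ) (z : ℂ) : ℝ := fderiv ℝ f z Complex.I

open Matrix

theorem pdx_re_of_hasDerivAt {f : ℂ → ℂ} {c z : ℂ} (h : HasDerivAt f c z) :
    pdx (fun w => (f w).re) z = c.re := by
  have hre : HasFDerivAt (fun w => (f w).re) _ z :=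
    reCLM.hasFDerivAt.comp z (h.hasFDerivAt.restrictScalars ℝ)
  simp [pdx, hre.fderiv]

theorem pdy_re_of_hasDerivAt {f : ℂ → ℂ} {c z : ℂ} (h : HasDerivAt f c z) :
    pdy (fun w => (f w).re) z = -c.im := by
  have hre : HasFDerivAt (fun w => (f w).re) _ z :=
    reCLM.hasFDerivAt.comp z (h.hasFDerivAt.restrictScalars ℝ)
  simp [pdy, hre.fderiv]

theorem crossProduct_re_mul_im_mul (ψ : ℂ) (v : Fin 3 → ℂ) :
    crossProduct (fun i => (ψ * v i).re) (fun i => (ψ * v i).im)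
      = ‖ψ‖ ^ 2 • crossProduct (fun i => (v i).re) (fun i => (v i).im) := by
  set a : Fin 3 → ℝ := fun i => (v i).re
  set b : Fin 3 → ℝ := fun i => (v i).im
  have hre : (fun i => (ψ * v i).re) = ψ.re • a - ψ.im • b := by
    ext i; simp [a, b, mul_re]
  have him : (fun i => (ψ * v i).im) = ψ.im • a + ψ.re • b := by
    ext i; simp [a, b, mul_im]; ring
  rw [hre, him, Complex.sq_norm, normSq_apply]
  simp only [map_add, map_sub, map_smul, LinearMap.sub_apply,
    LinearMap.smul_apply, cross_self, ← cross_anticomm b a]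
  module

noncomputable def inverseStereographic (g : ℂ) : Fin 3 → ℝ :=
  ![2 * g.re / (1 + ‖g‖ ^ 2), 2 * g.im / (1 + ‖g‖ ^ 2), (‖g‖ ^ 2 - 1) / (1 + ‖g‖ ^ 2)]

theorem one_add_sq_norm_smul_inverseStereographic (g : ℂ) :
    (1 + ‖g‖ ^ 2) • inverseStereographic g = ![2 * g.re, 2 * g.im, ‖g‖ ^ 2 - 1] := by
  have : 1 + ‖g‖ ^ 2 ≠ 0 := by positivity
  rw [inverseStereographic, smul_vec3]
  exact vec3_eq (mul_div_cancel₀ _ this) (mul_div_cancel₀ _ this) (mul_div_cancel₀ _ this)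

theorem inverseStereographic_sq_add_sq_add_sq (g : ℂ) :
    inverseStereographic g 0 ^ 2 + inverseStereographic g 1 ^ 2
      + inverseStereographic g 2 ^ 2 = 1 := by
  have hsq : ‖g‖ ^ 2 = g.re ^ 2 + g.im ^ 2 := by rw [Complex.sq_norm, normSq_apply]; ring
  simp only [inverseStereographic, cons_val, hsq]
  field_simp
  ring

def weierstrassVector (g : ℂ) : Fin 3 → ℂ := ![1 - g ^ 2, I * (1 + g ^ 2), 2 * g]

theorem div_two_mul_mul_weierstrassVector {g : ℂ} (hg : g ≠ 0) (φ : ℂ) :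
    (fun i => φ / (2 * g) * weierstrassVector g i)
      = ![(1 / 2) * (1 / g - g) * φ, (I / 2) * (1 / g + g) * φ, φ] := by
  ext i
  fin_cases i <;>
    simp only [weierstrassVector, Fin.zero_eta, Fin.mk_one, Fin.reduceFinMk, cons_val_zero,
      cons_val_one, cons_val, one_div] <;> field_simp

theorem crossProduct_re_im_weierstrassVector (g : ℂ) :
    crossProduct (fun i => (weierstrassVector g i).re) (fun i => (weierstrassVector g i).im)
      = -(1 + ‖g‖ ^ 2) • ![2 * g.re, 2 * g.im, ‖g‖ ^ 2 - 1] := by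
  rw [Complex.sq_norm, normSq_apply, cross_apply, smul_vec3]
  refine vec3_eq ?_ ?_ ?_ <;>
    simp only [weierstrassVector, cons_val, sq, mul_re, mul_im, add_re, add_im, sub_re, sub_im,
      one_re, one_im, I_re, I_im, re_ofNat, im_ofNat, smul_eq_mul] <;> ring

theorem weierstrass_conformalFactor_sq {g : ℂ} (hg : g ≠ 0) (φ : ℂ) :
    ((1 / 2) * (‖g‖ + 1 / ‖g‖) * ‖φ‖) ^ 2 = ‖φ / (2 * g)‖ ^ 2 * (1 + ‖g‖ ^ 2) ^ 2 := by
  have : ‖g‖ ≠ 0 := norm_ne_zero_iff.mpr hg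
  rw [norm_div, norm_mul, Complex.norm_two]
  field_simp
  ring

theorem weierstrass_normal_is_inverse_stereographic_projection_of_gauss_map_general
    (U : Set ℂ) (g φ : ℂ → ℂ)
    (hg0 : ∀ z ∈ U, g z ≠ 0)
    (F : Fin 3 → ℂ → ℂ)
    (hF0 : ∀ z ∈ U, HasDerivAt (F 0) ((1 / 2) * (1 / g z - g z) * φ z) z)
    (hF1 : ∀ z ∈ U, HasDerivAt (F 1) ((Complex.I / 2) * (1 / g z + g z) * φ z) z)
    (hF2 : ∀ z ∈ U, HasDerivAt (F 2) (φ z) z) :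
    ∀ z ∈ U,
      crossProduct (fun i => pdx (fun w => (F i w).re) z)
          (fun i => pdy (fun w => (F i w).re) z)
        = (((1 / 2) * (‖g z‖ + 1 / ‖g z‖) * ‖φ z‖) ^ 2)
            • ![2 * (g z).re / (1 + ‖g z‖ ^ 2),
                2 * (g z).im / (1 + ‖g z‖ ^ 2),
                (‖g z‖ ^ 2 - 1) / (1 + ‖g z‖ ^ 2)] ∧
      (2 * (g z).re / (1 + ‖g z‖ ^ 2)) ^ 2
          + (2 * (g z).im / (1 + ‖g z‖ ^ 2)) ^ 2
          + ((‖g z‖ ^ 2 - 1) / (1 + ‖g z‖ ^ 2)) ^ 2 = 1 := by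
  intro z hz
  have hgz := hg0 z hz
  set ψ := φ z / (2 * g z)
  have hF : ∀ i, HasDerivAt (F i) (ψ * weierstrassVector (g z) i) z := by
    intro i
    rw [congrFun (div_two_mul_mul_weierstrassVector hgz (φ z)) i]
    fin_cases i
    exacts [hF0 z hz, hF1 z hz, hF2 z hz]
  have hx :
      (fun i => pdx (fun w => (F i w).re) z) = fun i => (ψ * weierstrassVector (g z) i).re :=
    funext fun i => pdx_re_of_hasDerivAt (hF i)
  have hy :
      (fun i => pdy (fun w => (F i w).re) z) = -fun i => (ψ * weierstrassVector (g z) i).im :=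
    funext fun i => pdy_re_of_hasDerivAt (hF i)
  refine ⟨?_, inverseStereographic_sq_add_sq_add_sq (g z)⟩
  change _ = _ • inverseStereographic (g z)
  rw [hx, hy, map_neg, crossProduct_re_mul_im_mul, crossProduct_re_im_weierstrassVector,
    ← one_add_sq_norm_smul_inverseStereographic, weierstrass_conformalFactor_sq hgz]
  module

/-- For the Weierstrass representation `X = Re F` with data `(g, φ dz)`, the cross
product `(∂X/∂x) × (∂X/∂y)` equals `Λ² N`, where `Λ = (1/2)(|g| + 1/|g|)|φ|` and
`N = (2 Re g, 2 Im g, |g|² − 1)/(1 + |g|²)` is the inverse stereographic projection of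
`g`; in particular the unit normal of `X` is `N`, which lies on the unit sphere. -/
theorem weierstrass_normal_is_inverse_stereographic_projection_of_gauss_map
    (U : Set ℂ) (hU : IsOpen U) (g φ : ℂ → ℂ)
    (hg : DifferentiableOn ℂ g U) (hφ : DifferentiableOn ℂ φ U)
    (hg0 : ∀ z ∈ U, g z ≠ 0) (hφ0 : ∀ z ∈ U, φ z ≠ 0)
    (F : Fin 3 → ℂ → ℂ)
    (hF0 : ∀ z ∈ U, HasDerivAt (F 0) ((1 / 2) * (1 / g z - g z) * φ z) z)
    (hF1 : ∀ z ∈ U, HasDerivAt (F 1) ((Complex.I / 2) * (1 / g z + g z) * φ z) z)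
    (hF2 : ∀ z ∈ U, HasDerivAt (F 2) (φ z) z) :
    ∀ z ∈ U,
      crossProduct (fun i => pdx (fun w => (F i w).re) z)
          (fun i => pdy (fun w => (F i w).re) z)
        = (((1 / 2) * (‖g z‖ + 1 / ‖g z‖) * ‖φ z‖) ^ 2)
            • ![2 * (g z).re / (1 + ‖g z‖ ^ 2),
                2 * (g z).im / (1 + ‖g z‖ ^ 2),
                (‖g z‖ ^ 2 - 1) / (1 + ‖g z‖ ^ 2)] ∧
      (2 * (g z).re / (1 + ‖g z‖ ^ 2)) ^ 2
          + (2 * (g z).im / (1 + ‖g z‖ ^ 2)) ^ 2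
          + ((‖g z‖ ^ 2 - 1) / (1 + ‖g z‖ ^ 2)) ^ 2 = 1 :=
  weierstrass_normal_is_inverse_stereographic_projection_of_gauss_map_general U g φ hg0 F hF0 hF1
    hF2
end

section
/- Let U ⊆ ℂ be open and let X = (x₁, x₂, x₃) : U → ℝ³ be a conformally parametrized minimal surface whose image is disjoint from the x₃-axis, i.e. x₁² + x₂² > 0 on U. Then at every point of U the flat Laplacian of log√(x₁² + x₂²) satisfies |Δ log√(x₁² + x₂²)| ≤ ((∂x₃/∂x)² + (∂x₃/∂y)²)/(x₁² + x₂²). (This is the conformal-coordinate form of the intrinsic inequality |Δ_M ln r| ≤ |∇x₃|²/r² on any minimal surface in ℝ³ minus the x₃-axis, since both sides rescale by the same conformal factor.) -/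
open Complex

/-- Flat Laplacian `∂²/∂x² + ∂²/∂y²` on `ℂ ≅ ℝ²`. -/
noncomputable def lap (f : ℂ → ℝ) (z : ℂ) : ℝ :=
  fderiv ℝ (fun w => fderiv ℝ f w 1) z 1
    + fderiv ℝ (fun w => fderiv ℝ f w Complex.I) z Complex.I


lemma lap_term (x₁ x₂ : ℂ → ℝ) (U : Set ℂ) (hU : IsOpen U) (z : ℂ) (hz : z ∈ U)
    (h1 : ContDiffOn ℝ (⊤ : ℕ∞) x₁ U) (h2 : ContDiffOn ℝ (⊤ : ℕ∞) x₂ U)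
    (hpos : ∀ w ∈ U, 0 < x₁ w ^ 2 + x₂ w ^ 2) (v : ℂ) :
    fderiv ℝ (fun w => fderiv ℝ (fun w' => Real.log (Real.sqrt (x₁ w' ^ 2 + x₂ w' ^ 2))) w v) z v
      = (fderiv ℝ x₁ z v ^ 2 + fderiv ℝ x₂ z v ^ 2
          + x₁ z * fderiv ℝ (fun w => fderiv ℝ x₁ w v) z v
          + x₂ z * fderiv ℝ (fun w => fderiv ℝ x₂ w v) z v) / (x₁ z ^ 2 + x₂ z ^ 2)
        - 2 * (x₁ z * fderiv ℝ x₁ z v + x₂ z * fderiv ℝ x₂ z v) ^ 2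
            / (x₁ z ^ 2 + x₂ z ^ 2) ^ 2 := by
  set g : ℂ → ℝ := fun w => x₁ w ^ 2 + x₂ w ^ 2 with hg
  have hd : ∀ (u : ℂ → ℝ), ContDiffOn ℝ (⊤ : ℕ∞) u U → ∀ w ∈ U, DifferentiableAt ℝ u w := fun u hu w hw =>
    (hu.contDiffAt (hU.mem_nhds hw)).differentiableAt (by simp)
  have hd₁ := hd x₁ h1
  have hd₂ := hd x₂ h2
  -- derivative of g
  have Hg : ∀ w ∈ U, HasFDerivAt g
      ((2 * x₁ w) • fderiv ℝ x₁ w + (2 * x₂ w) • fderiv ℝ x₂ w) w := by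
    intro w hw
    have hx := (hd₁ w hw).hasFDerivAt
    have hy := (hd₂ w hw).hasFDerivAt
    have := (hx.mul hx).add (hy.mul hy)
    have e : g = x₁ * x₁ + x₂ * x₂ := by funext w'; simp [hg]; ring
    rw [e]
    refine this.congr_fderiv ?_
    ext u
    simp [two_smul, smul_smul]
    ring
  have hgd : ∀ w ∈ U, DifferentiableAt ℝ g w := fun w hw => (Hg w hw).differentiableAt
  have hgne : ∀ w ∈ U, g w ≠ 0 := fun w hw => (hpos w hw).ne'
  -- first derivative of log sqrt g, as a function on U
  have e1 : ∀ w ∈ U, fderiv ℝ (fun w' => Real.log (Real.sqrt (x₁ w' ^ 2 + x₂ w' ^ 2))) w v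
      = (x₁ w * fderiv ℝ x₁ w v + x₂ w * fderiv ℝ x₂ w v) * (g w)⁻¹ := by
    intro w hw
    have ev : (fun w' => Real.log (Real.sqrt (x₁ w' ^ 2 + x₂ w' ^ 2)))
        =ᶠ[nhds w] fun w' => Real.log (g w') * (1/2 : ℝ) := by
      apply Filter.eventuallyEq_of_mem (hU.mem_nhds hw)
      intro w' hw'
      have : (0:ℝ) ≤ g w' := (hpos w' hw').le
      simp only [hg]
      rw [Real.log_sqrt this]
      ring
    rw [ev.fderiv_eq]
    have Hl : HasFDerivAt (fun w' => Real.log (g w') * (1/2 : ℝ))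
        ((1/2 : ℝ) • ((g w)⁻¹ • ((2 * x₁ w) • fderiv ℝ x₁ w + (2 * x₂ w) • fderiv ℝ x₂ w))) w := by
      exact ((Hg w hw).log (hgne w hw)).mul_const (1/2 : ℝ)
    rw [Hl.fderiv]
    have hne : x₁ w ^ 2 + x₂ w ^ 2 ≠ 0 := hgne w hw
    simp only [ContinuousLinearMap.smul_apply, ContinuousLinearMap.add_apply, smul_eq_mul, hg]
    field_simp
  -- differentiability of the second-derivative pieces
  have hS : ∀ (u : ℂ → ℝ), ContDiffOn ℝ (⊤ : ℕ∞) u U → DifferentiableAt ℝ (fun w => fderiv ℝ u w v) z := by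
    intro u hu
    exact (((hu.contDiffAt (hU.mem_nhds hz)).fderiv_right (m := 1) (by exact WithTop.coe_le_coe.mpr le_top)).differentiableAt (by simp)).clm_apply
      (differentiableAt_const v)
  have hS₁ := hS x₁ h1
  have hS₂ := hS x₂ h2
  -- rewrite the outer fderiv
  have ev2 : (fun w => fderiv ℝ (fun w' => Real.log (Real.sqrt (x₁ w' ^ 2 + x₂ w' ^ 2))) w v)
      =ᶠ[nhds z] fun w => (x₁ w * fderiv ℝ x₁ w v + x₂ w * fderiv ℝ x₂ w v) * (g w)⁻¹ :=
    Filter.eventuallyEq_of_mem (hU.mem_nhds hz) (fun w hw => e1 w hw)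
  rw [ev2.fderiv_eq]
  -- now compute
  have HN : HasFDerivAt (fun w => x₁ w * fderiv ℝ x₁ w v + x₂ w * fderiv ℝ x₂ w v)
      ((x₁ z • fderiv ℝ (fun w => fderiv ℝ x₁ w v) z + fderiv ℝ x₁ z v • fderiv ℝ x₁ z)
        + (x₂ z • fderiv ℝ (fun w => fderiv ℝ x₂ w v) z + fderiv ℝ x₂ z v • fderiv ℝ x₂ z)) z :=
    (((hd₁ z hz).hasFDerivAt.mul hS₁.hasFDerivAt).add
      ((hd₂ z hz).hasFDerivAt.mul hS₂.hasFDerivAt))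
  have Hinv : HasFDerivAt (fun w => (g w)⁻¹)
      ((ContinuousLinearMap.smulRight (1 : ℝ →L[ℝ] ℝ) (-(g z ^ 2)⁻¹)).comp
        ((2 * x₁ z) • fderiv ℝ x₁ z + (2 * x₂ z) • fderiv ℝ x₂ z)) z :=
    (hasFDerivAt_inv (hgne z hz)).comp z (Hg z hz)
  have Hfull : HasFDerivAt (fun w => (x₁ w * fderiv ℝ x₁ w v + x₂ w * fderiv ℝ x₂ w v) * (g w)⁻¹) _ z :=
    HN.mul Hinv
  rw [Hfull.fderiv]
  simp only [ContinuousLinearMap.add_apply, ContinuousLinearMap.smul_apply,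
    ContinuousLinearMap.coe_comp', Function.comp_apply, ContinuousLinearMap.smulRight_apply,
    ContinuousLinearMap.one_apply, smul_eq_mul, hg]
  have hq : x₁ z ^ 2 + x₂ z ^ 2 ≠ 0 := hgne z hz
  field_simp
  ring

lemma alg_est (a₁ a₂ b₁ b₂ s t p₁ p₂ : ℝ) (hq : 0 < p₁^2+p₂^2)
    (h1 : a₁*b₁+a₂*b₂+s*t = 0)
    (h2 : a₁^2+a₂^2+s^2 = b₁^2+b₂^2+t^2) :
    |(a₁^2+a₂^2+b₁^2+b₂^2)/(p₁^2+p₂^2)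
      - 2*((p₁*a₁+p₂*a₂)^2+(p₁*b₁+p₂*b₂)^2)/(p₁^2+p₂^2)^2| ≤ (s^2+t^2)/(p₁^2+p₂^2) := by
  have hid : ((p₁*a₂-p₂*a₁)^2+(p₁*b₂-p₂*b₁)^2-((p₁*a₁+p₂*a₂)^2+(p₁*b₁+p₂*b₂)^2))^2
      + 4*((p₁*a₁+p₂*a₂)*(p₁*a₂-p₂*a₁)+(p₁*b₁+p₂*b₂)*(p₁*b₂-p₂*b₁))^2
      = ((p₁^2+p₂^2)*(s^2+t^2))^2 := by
    linear_combination ((p₁^2+p₂^2)^2*((a₁^2+a₂^2)-(b₁^2+b₂^2)+t^2-s^2))*h2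
      + (4*(p₁^2+p₂^2)^2*(a₁*b₁+a₂*b₂-s*t))*h1
  set q := p₁^2+p₂^2 with hqdef
  set A := p₁*a₁+p₂*a₂
  set B := p₁*b₁+p₂*b₂
  set A' := p₁*a₂-p₂*a₁
  set B' := p₁*b₂-p₂*b₁
  have key : |(A'^2+B'^2) - (A^2+B^2)| ≤ q*(s^2+t^2) := by
    apply abs_le_of_sq_le_sq
    · nlinarith [sq_nonneg (A*A'+B*B')]
    · positivity
  have e : (a₁^2+a₂^2+b₁^2+b₂^2)/q - 2*(A^2+B^2)/q^2 = ((A'^2+B'^2) - (A^2+B^2))/q^2 := by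
    rw [div_sub_div _ _ (ne_of_gt hq) (ne_of_gt (pow_pos hq 2)),
      div_eq_div_iff (by positivity) (by positivity)]
    ring
  rw [e, abs_div, abs_of_pos (pow_pos hq 2), div_le_div_iff₀ (pow_pos hq 2) hq]
  calc |(A'^2+B'^2) - (A^2+B^2)| * q ≤ (q*(s^2+t^2)) * q :=
        mul_le_mul_of_nonneg_right key hq.le
    _ = (s^2+t^2)*q^2 := by ring

/-- For a conformally parametrized minimal surface `X = (x₁,x₂,x₃)` disjoint from the
`x₃`-axis, the flat Laplacian of `log √(x₁² + x₂²)` satisfies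
`|Δ log r| ≤ ((∂x₃/∂x)² + (∂x₃/∂y)²)/(x₁² + x₂²)`. -/
theorem laplacian_log_r_estimate_on_minimal_surface
    (U : Set ℂ) (hU : IsOpen U) (x₁ x₂ x₃ : ℂ → ℝ)
    (hsm₁ : ContDiffOn ℝ (⊤ : ℕ∞) x₁ U) (hsm₂ : ContDiffOn ℝ (⊤ : ℕ∞) x₂ U) (hsm₃ : ContDiffOn ℝ (⊤ : ℕ∞) x₃ U)
    (hharm₁ : ∀ z ∈ U, lap x₁ z = 0) (hharm₂ : ∀ z ∈ U, lap x₂ z = 0)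
    (hharm₃ : ∀ z ∈ U, lap x₃ z = 0)
    (hconf₁ : ∀ z ∈ U,
      pdx x₁ z * pdy x₁ z + pdx x₂ z * pdy x₂ z + pdx x₃ z * pdy x₃ z = 0)
    (hconf₂ : ∀ z ∈ U,
      pdx x₁ z ^ 2 + pdx x₂ z ^ 2 + pdx x₃ z ^ 2
        = pdy x₁ z ^ 2 + pdy x₂ z ^ 2 + pdy x₃ z ^ 2)
    (hconf₃ : ∀ z ∈ U, 0 < pdx x₁ z ^ 2 + pdx x₂ z ^ 2 + pdx x₃ z ^ 2)
    (haxis : ∀ z ∈ U, 0 < x₁ z ^ 2 + x₂ z ^ 2) :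
    ∀ z ∈ U,
      |lap (fun w => Real.log (Real.sqrt (x₁ w ^ 2 + x₂ w ^ 2))) z|
        ≤ (pdx x₃ z ^ 2 + pdy x₃ z ^ 2) / (x₁ z ^ 2 + x₂ z ^ 2) := by
  intro z hz
  have hq := haxis z hz
  have t1 := lap_term x₁ x₂ U hU z hz hsm₁ hsm₂ haxis 1
  have tI := lap_term x₁ x₂ U hU z hz hsm₁ hsm₂ haxis Complex.I
  have hx1 : fderiv ℝ (fun w => fderiv ℝ x₁ w 1) z 1
      + fderiv ℝ (fun w => fderiv ℝ x₁ w Complex.I) z Complex.I = 0 := hharm₁ z hz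
  have hx2 : fderiv ℝ (fun w => fderiv ℝ x₂ w 1) z 1
      + fderiv ℝ (fun w => fderiv ℝ x₂ w Complex.I) z Complex.I = 0 := hharm₂ z hz
  have h1' : fderiv ℝ x₁ z 1 * fderiv ℝ x₁ z Complex.I
      + fderiv ℝ x₂ z 1 * fderiv ℝ x₂ z Complex.I
      + fderiv ℝ x₃ z 1 * fderiv ℝ x₃ z Complex.I = 0 := hconf₁ z hz
  have h2' : fderiv ℝ x₁ z 1 ^ 2 + fderiv ℝ x₂ z 1 ^ 2 + fderiv ℝ x₃ z 1 ^ 2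
      = fderiv ℝ x₁ z Complex.I ^ 2 + fderiv ℝ x₂ z Complex.I ^ 2
        + fderiv ℝ x₃ z Complex.I ^ 2 := hconf₂ z hz
  have key := alg_est (fderiv ℝ x₁ z 1) (fderiv ℝ x₂ z 1)
    (fderiv ℝ x₁ z Complex.I) (fderiv ℝ x₂ z Complex.I)
    (fderiv ℝ x₃ z 1) (fderiv ℝ x₃ z Complex.I) (x₁ z) (x₂ z) hq h1' h2'
  show |lap _ z| ≤ _
  rw [lap, t1, tI]
  simp only [pdx, pdy]
  have hEq : (fderiv ℝ x₁ z 1 ^ 2 + fderiv ℝ x₂ z 1 ^ 2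
          + x₁ z * fderiv ℝ (fun w => fderiv ℝ x₁ w 1) z 1
          + x₂ z * fderiv ℝ (fun w => fderiv ℝ x₂ w 1) z 1) / (x₁ z ^ 2 + x₂ z ^ 2)
        - 2 * (x₁ z * fderiv ℝ x₁ z 1 + x₂ z * fderiv ℝ x₂ z 1) ^ 2 / (x₁ z ^ 2 + x₂ z ^ 2) ^ 2
      + ((fderiv ℝ x₁ z Complex.I ^ 2 + fderiv ℝ x₂ z Complex.I ^ 2
          + x₁ z * fderiv ℝ (fun w => fderiv ℝ x₁ w Complex.I) z Complex.I
          + x₂ z * fderiv ℝ (fun w => fderiv ℝ x₂ w Complex.I) z Complex.I) / (x₁ z ^ 2 + x₂ z ^ 2)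
        - 2 * (x₁ z * fderiv ℝ x₁ z Complex.I + x₂ z * fderiv ℝ x₂ z Complex.I) ^ 2
            / (x₁ z ^ 2 + x₂ z ^ 2) ^ 2)
      = (fderiv ℝ x₁ z 1 ^ 2 + fderiv ℝ x₂ z 1 ^ 2 + fderiv ℝ x₁ z Complex.I ^ 2
          + fderiv ℝ x₂ z Complex.I ^ 2) / (x₁ z ^ 2 + x₂ z ^ 2)
        - 2 * ((x₁ z * fderiv ℝ x₁ z 1 + x₂ z * fderiv ℝ x₂ z 1) ^ 2
            + (x₁ z * fderiv ℝ x₁ z Complex.I + x₂ z * fderiv ℝ x₂ z Complex.I) ^ 2)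
            / (x₁ z ^ 2 + x₂ z ^ 2) ^ 2 := by
    have hqne : x₁ z ^ 2 + x₂ z ^ 2 ≠ 0 := hq.ne'
    field_simp
    linear_combination ((x₁ z ^ 2 + x₂ z ^ 2) * x₁ z) * hx1
      + ((x₁ z ^ 2 + x₂ z ^ 2) * x₂ z) * hx2
  rw [hEq]
  exact key
end

section
/- Let U ⊆ ℂ be open and let X = (x₁, x₂, x₃) : U → ℝ³ be a conformally parametrized minimal surface whose image is contained in the region {x₁² + x₂² ≥ 1}. Then the function log√(x₁² + x₂²) − x₃² is superharmonic on U: its flat Laplacian satisfies Δ(log√(x₁² + x₂²) − x₃²) ≤ 0 at every point of U. (Thus ln r − x₃², with r = √(x₁² + x₂²), is a universal superharmonic function for the region {r ≥ 1}.) -/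
open Complex

lemma alg_key (a₁ a₂ a₃ b₁ b₂ b₃ p q : ℝ)
    (h1 : a₁*b₁ + a₂*b₂ + a₃*b₃ = 0)
    (h2 : a₁^2+a₂^2+a₃^2 = b₁^2+b₂^2+b₃^2)
    (hl : 0 < a₁^2+a₂^2+a₃^2)
    (hu1 : 1 ≤ p^2+q^2) :
    (a₁^2+a₂^2+b₁^2+b₂^2)*(p^2+q^2) - 2*((p*a₁+q*a₂)^2+(p*b₁+q*b₂)^2)
      - 2*(a₃^2+b₃^2)*(p^2+q^2)^2 ≤ 0 := by
  have I1 : (a₁^2+a₂^2+a₃^2)*((p*a₁+q*a₂)^2+(p*b₁+q*b₂)^2)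
      = (p^2+q^2)*(a₁^2+a₂^2+a₃^2)^2 - (p*(a₂*b₃-a₃*b₂)+q*(a₃*b₁-a₁*b₃))^2 := by
    linear_combination (2*(p*a₁+q*a₂)*(p*b₁+q*b₂) - (p^2+q^2)*(a₁*b₁+a₂*b₂+a₃*b₃))*h1
      + ((p*a₁+q*a₂)^2 - (p^2+q^2)*(a₁^2+a₂^2+a₃^2))*h2
  have I2 : (a₁^2+a₂^2+a₃^2)*(a₃^2+b₃^2) = (a₁^2+a₂^2+a₃^2)^2 - (a₁*b₂-a₂*b₁)^2 := by
    linear_combination (2*a₃*b₃ - (a₁*b₁+a₂*b₂+a₃*b₃))*h1 + (a₃^2 - (a₁^2+a₂^2+a₃^2))*h2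
  have I3 : (a₁^2+a₂^2+a₃^2)^2 = (a₂*b₃-a₃*b₂)^2 + (a₃*b₁-a₁*b₃)^2 + (a₁*b₂-a₂*b₁)^2 := by
    linear_combination (a₁*b₁+a₂*b₂+a₃*b₃)*h1 + (a₁^2+a₂^2+a₃^2)*h2
  have key : (a₁^2+a₂^2+a₃^2)*(((p*a₁+q*a₂)^2+(p*b₁+q*b₂)^2)
      - ((a₁^2+a₂^2+a₃^2) - (a₃^2+b₃^2))*(p^2+q^2))
      = (p*(a₃*b₁-a₁*b₃) - q*(a₂*b₃-a₃*b₂))^2 := by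
    linear_combination I1 + (p^2+q^2)*I2 + (p^2+q^2)*I3
  have h5 : 0 ≤ (a₁^2+a₂^2+a₃^2)*(((p*a₁+q*a₂)^2+(p*b₁+q*b₂)^2)
      - ((a₁^2+a₂^2+a₃^2) - (a₃^2+b₃^2))*(p^2+q^2)) := by rw [key]; positivity
  have hE : ((a₁^2+a₂^2+a₃^2) - (a₃^2+b₃^2))*(p^2+q^2) ≤ (p*a₁+q*a₂)^2+(p*b₁+q*b₂)^2 :=
    sub_nonneg.mp (nonneg_of_mul_nonneg_right h5 hl)
  have hs0 : (0:ℝ) ≤ a₃^2 + b₃^2 := by positivity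
  have huu : (p^2+q^2) ≤ (p^2+q^2)^2 := by nlinarith [hu1]
  have hsu : (a₃^2+b₃^2)*(p^2+q^2) ≤ (a₃^2+b₃^2)*((p^2+q^2)^2) :=
    mul_le_mul_of_nonneg_left huu hs0
  have h2u : (a₁^2+a₂^2+b₁^2+b₂^2)*(p^2+q^2)
      = (2*(a₁^2+a₂^2+a₃^2) - (a₃^2+b₃^2))*(p^2+q^2) := by
    linear_combination -(p^2+q^2)*h2
  linarith [hE, hsu, h2u, mul_nonneg hs0 (sq_nonneg (p^2+q^2))]

open Complex

lemma second_formula (U : Set ℂ) (hU : IsOpen U) (x₁ x₂ x₃ : ℂ → ℝ)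
    (hsm₁ : ContDiffOn ℝ (⊤ : ℕ∞) x₁ U) (hsm₂ : ContDiffOn ℝ (⊤ : ℕ∞) x₂ U) (hsm₃ : ContDiffOn ℝ (⊤ : ℕ∞) x₃ U)
    (hpos : ∀ w ∈ U, 0 < x₁ w ^ 2 + x₂ w ^ 2) (z : ℂ) (hz : z ∈ U) (v : ℂ) :
    fderiv ℝ (fun w => fderiv ℝ
        (fun w' => Real.log (x₁ w' ^ 2 + x₂ w' ^ 2) / 2 - x₃ w' ^ 2) w v) z v
      = ((fderiv ℝ x₁ z v) ^ 2 + (fderiv ℝ x₂ z v) ^ 2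
          + x₁ z * fderiv ℝ (fun w => fderiv ℝ x₁ w v) z v
          + x₂ z * fderiv ℝ (fun w => fderiv ℝ x₂ w v) z v) / (x₁ z ^ 2 + x₂ z ^ 2)
        - (x₁ z * fderiv ℝ x₁ z v + x₂ z * fderiv ℝ x₂ z v)
            * (2 * (x₁ z * fderiv ℝ x₁ z v) + 2 * (x₂ z * fderiv ℝ x₂ z v))
            / (x₁ z ^ 2 + x₂ z ^ 2) ^ 2
        - 2 * ((fderiv ℝ x₃ z v) ^ 2
            + x₃ z * fderiv ℝ (fun w => fderiv ℝ x₃ w v) z v) := by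
  have hd₁ : ∀ w ∈ U, DifferentiableAt ℝ x₁ w := fun w hw =>
    (hsm₁.contDiffAt (hU.mem_nhds hw)).differentiableAt (by simp)
  have hd₂ : ∀ w ∈ U, DifferentiableAt ℝ x₂ w := fun w hw =>
    (hsm₂.contDiffAt (hU.mem_nhds hw)).differentiableAt (by simp)
  have hd₃ : ∀ w ∈ U, DifferentiableAt ℝ x₃ w := fun w hw =>
    (hsm₃.contDiffAt (hU.mem_nhds hw)).differentiableAt (by simp)
  -- first derivative formula on U
  have step1 : ∀ w ∈ U,
      fderiv ℝ (fun w' => Real.log (x₁ w' ^ 2 + x₂ w' ^ 2) / 2 - x₃ w' ^ 2) w v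
        = (x₁ w * fderiv ℝ x₁ w v + x₂ w * fderiv ℝ x₂ w v) * (x₁ w ^ 2 + x₂ w ^ 2)⁻¹
          - 2 * (x₃ w * fderiv ℝ x₃ w v) := by
    intro w hw
    have hne : x₁ w ^ 2 + x₂ w ^ 2 ≠ 0 := ne_of_gt (hpos w hw)
    have h1 := (hd₁ w hw).hasFDerivAt
    have h2 := (hd₂ w hw).hasFDerivAt
    have h3 := (hd₃ w hw).hasFDerivAt
    have hsq : HasFDerivAt (fun w' => x₁ w' ^ 2 + x₂ w' ^ 2)
        (((2:ℝ) * x₁ w ^ 1) • fderiv ℝ x₁ w + ((2:ℝ) * x₂ w ^ 1) • fderiv ℝ x₂ w) w := by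
      exact ((hasDerivAt_pow 2 (x₁ w)).comp_hasFDerivAt w h1).add
        ((hasDerivAt_pow 2 (x₂ w)).comp_hasFDerivAt w h2)
    have hld : HasDerivAt (fun t : ℝ => Real.log t / 2) ((x₁ w ^ 2 + x₂ w ^ 2)⁻¹ / 2)
        (x₁ w ^ 2 + x₂ w ^ 2) := (Real.hasDerivAt_log hne).div_const 2
    have hg : HasFDerivAt (fun w' => Real.log (x₁ w' ^ 2 + x₂ w' ^ 2) / 2 - x₃ w' ^ 2)
        (((x₁ w ^ 2 + x₂ w ^ 2)⁻¹ / 2) •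
            (((2:ℝ) * x₁ w ^ 1) • fderiv ℝ x₁ w + ((2:ℝ) * x₂ w ^ 1) • fderiv ℝ x₂ w)
          - ((2:ℝ) * x₃ w ^ 1) • fderiv ℝ x₃ w) w := by
      exact (hld.comp_hasFDerivAt w hsq).sub ((hasDerivAt_pow 2 (x₃ w)).comp_hasFDerivAt w h3)
    rw [hg.fderiv]
    simp only [ContinuousLinearMap.coe_sub', Pi.sub_apply, ContinuousLinearMap.coe_smul',
      Pi.smul_apply, ContinuousLinearMap.add_apply, smul_eq_mul, pow_one]
    field_simp
  -- replace by the explicit function and differentiate again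
  have step2 : fderiv ℝ (fun w => fderiv ℝ
      (fun w' => Real.log (x₁ w' ^ 2 + x₂ w' ^ 2) / 2 - x₃ w' ^ 2) w v) z
      = fderiv ℝ (fun w =>
          (x₁ w * fderiv ℝ x₁ w v + x₂ w * fderiv ℝ x₂ w v) * (x₁ w ^ 2 + x₂ w ^ 2)⁻¹
            - 2 * (x₃ w * fderiv ℝ x₃ w v)) z := by
    apply Filter.EventuallyEq.fderiv_eq
    filter_upwards [hU.mem_nhds hz] with y hy
    exact step1 y hy
  have hne : x₁ z ^ 2 + x₂ z ^ 2 ≠ 0 := ne_of_gt (hpos z hz)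
  have h1 := (hd₁ z hz).hasFDerivAt
  have h2 := (hd₂ z hz).hasFDerivAt
  have h3 := (hd₃ z hz).hasFDerivAt
  have hA₁ : DifferentiableAt ℝ (fun w => fderiv ℝ x₁ w v) z :=
    ((((hsm₁.fderiv_of_isOpen hU (by simp) :
        ContDiffOn ℝ (⊤ : ℕ∞) (fderiv ℝ x₁) U)).contDiffAt
        (hU.mem_nhds hz)).differentiableAt (by simp)).clm_apply (differentiableAt_const v)
  have hA₂ : DifferentiableAt ℝ (fun w => fderiv ℝ x₂ w v) z :=
    ((((hsm₂.fderiv_of_isOpen hU (by simp) :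
        ContDiffOn ℝ (⊤ : ℕ∞) (fderiv ℝ x₂) U)).contDiffAt
        (hU.mem_nhds hz)).differentiableAt (by simp)).clm_apply (differentiableAt_const v)
  have hA₃ : DifferentiableAt ℝ (fun w => fderiv ℝ x₃ w v) z :=
    ((((hsm₃.fderiv_of_isOpen hU (by simp) :
        ContDiffOn ℝ (⊤ : ℕ∞) (fderiv ℝ x₃) U)).contDiffAt
        (hU.mem_nhds hz)).differentiableAt (by simp)).clm_apply (differentiableAt_const v)
  have hsq : HasFDerivAt (fun w' => x₁ w' ^ 2 + x₂ w' ^ 2)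
      (((2:ℝ) * x₁ z ^ 1) • fderiv ℝ x₁ z + ((2:ℝ) * x₂ z ^ 1) • fderiv ℝ x₂ z) z := by
    exact ((hasDerivAt_pow 2 (x₁ z)).comp_hasFDerivAt z h1).add
      ((hasDerivAt_pow 2 (x₂ z)).comp_hasFDerivAt z h2)
  have hInv : HasFDerivAt (fun w => (x₁ w ^ 2 + x₂ w ^ 2)⁻¹)
      ((-((x₁ z ^ 2 + x₂ z ^ 2) ^ 2)⁻¹) •
        (((2:ℝ) * x₁ z ^ 1) • fderiv ℝ x₁ z + ((2:ℝ) * x₂ z ^ 1) • fderiv ℝ x₂ z)) z := by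
    exact (hasDerivAt_inv hne).comp_hasFDerivAt z hsq
  have hN : HasFDerivAt (fun w => x₁ w * fderiv ℝ x₁ w v + x₂ w * fderiv ℝ x₂ w v)
      ((x₁ z • fderiv ℝ (fun w => fderiv ℝ x₁ w v) z + fderiv ℝ x₁ z v • fderiv ℝ x₁ z)
        + (x₂ z • fderiv ℝ (fun w => fderiv ℝ x₂ w v) z
            + fderiv ℝ x₂ z v • fderiv ℝ x₂ z)) z :=
    (h1.mul hA₁.hasFDerivAt).add (h2.mul hA₂.hasFDerivAt)
  have hT : HasFDerivAt (fun w => 2 * (x₃ w * fderiv ℝ x₃ w v))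
      ((2:ℝ) • (x₃ z • fderiv ℝ (fun w => fderiv ℝ x₃ w v) z
        + fderiv ℝ x₃ z v • fderiv ℝ x₃ z)) z :=
    (h3.mul hA₃.hasFDerivAt).const_mul 2
  have hφ := (hN.mul hInv).sub hT
  rw [step2, HasFDerivAt.fderiv (f := fun w => (x₁ w * fderiv ℝ x₁ w v + x₂ w * fderiv ℝ x₂ w v)
      * (x₁ w ^ 2 + x₂ w ^ 2)⁻¹ - 2 * (x₃ w * fderiv ℝ x₃ w v)) hφ]
  simp only [ContinuousLinearMap.coe_sub', Pi.sub_apply, ContinuousLinearMap.add_apply,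
    ContinuousLinearMap.coe_smul', Pi.smul_apply, smul_eq_mul, pow_one,
    ContinuousLinearMap.smulRight_apply]
  field_simp
  ring

/-- `ln r − x₃²` is a universal superharmonic function on `{r ≥ 1}`: for a conformally
parametrized minimal surface `X = (x₁,x₂,x₃)` contained in `{x₁² + x₂² ≥ 1}`, the flat
Laplacian of `log √(x₁² + x₂²) − x₃²` is nonpositive. -/
theorem log_r_minus_x3_squared_superharmonic_on_minimal_surface
    (U : Set ℂ) (hU : IsOpen U) (x₁ x₂ x₃ : ℂ → ℝ)
    (hsm₁ : ContDiffOn ℝ (⊤ : ℕ∞) x₁ U) (hsm₂ : ContDiffOn ℝ (⊤ : ℕ∞) x₂ U) (hsm₃ : ContDiffOn ℝ (⊤ : ℕ∞) x₃ U)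
    (hharm₁ : ∀ z ∈ U, lap x₁ z = 0) (hharm₂ : ∀ z ∈ U, lap x₂ z = 0)
    (hharm₃ : ∀ z ∈ U, lap x₃ z = 0)
    (hconf₁ : ∀ z ∈ U,
      pdx x₁ z * pdy x₁ z + pdx x₂ z * pdy x₂ z + pdx x₃ z * pdy x₃ z = 0)
    (hconf₂ : ∀ z ∈ U,
      pdx x₁ z ^ 2 + pdx x₂ z ^ 2 + pdx x₃ z ^ 2
        = pdy x₁ z ^ 2 + pdy x₂ z ^ 2 + pdy x₃ z ^ 2)
    (hconf₃ : ∀ z ∈ U, 0 < pdx x₁ z ^ 2 + pdx x₂ z ^ 2 + pdx x₃ z ^ 2)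
    (hreg : ∀ z ∈ U, 1 ≤ x₁ z ^ 2 + x₂ z ^ 2) :
    ∀ z ∈ U,
      lap (fun w => Real.log (Real.sqrt (x₁ w ^ 2 + x₂ w ^ 2)) - x₃ w ^ 2) z ≤ 0 := by
  intro z hz
  have hpos : ∀ w ∈ U, 0 < x₁ w ^ 2 + x₂ w ^ 2 := fun w hw =>
    lt_of_lt_of_le one_pos (hreg w hw)
  -- replace sqrt-log by log/2
  have hfd : ∀ w ∈ U,
      fderiv ℝ (fun w' => Real.log (Real.sqrt (x₁ w' ^ 2 + x₂ w' ^ 2)) - x₃ w' ^ 2) w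
        = fderiv ℝ (fun w' => Real.log (x₁ w' ^ 2 + x₂ w' ^ 2) / 2 - x₃ w' ^ 2) w := by
    intro w hw
    apply Filter.EventuallyEq.fderiv_eq
    filter_upwards [hU.mem_nhds hw] with y _
    rw [Real.log_sqrt (by positivity)]
  have hlap : lap (fun w => Real.log (Real.sqrt (x₁ w ^ 2 + x₂ w ^ 2)) - x₃ w ^ 2) z
      = lap (fun w' => Real.log (x₁ w' ^ 2 + x₂ w' ^ 2) / 2 - x₃ w' ^ 2) z := by
    have e1 : fderiv ℝ (fun w => fderiv ℝ
        (fun w' => Real.log (Real.sqrt (x₁ w' ^ 2 + x₂ w' ^ 2)) - x₃ w' ^ 2) w 1) z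
        = fderiv ℝ (fun w => fderiv ℝ
          (fun w' => Real.log (x₁ w' ^ 2 + x₂ w' ^ 2) / 2 - x₃ w' ^ 2) w 1) z := by
      apply Filter.EventuallyEq.fderiv_eq
      filter_upwards [hU.mem_nhds hz] with y hy
      rw [hfd y hy]
    have e2 : fderiv ℝ (fun w => fderiv ℝ
        (fun w' => Real.log (Real.sqrt (x₁ w' ^ 2 + x₂ w' ^ 2)) - x₃ w' ^ 2) w Complex.I) z
        = fderiv ℝ (fun w => fderiv ℝ
          (fun w' => Real.log (x₁ w' ^ 2 + x₂ w' ^ 2) / 2 - x₃ w' ^ 2) w Complex.I) z := by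
      apply Filter.EventuallyEq.fderiv_eq
      filter_upwards [hU.mem_nhds hz] with y hy
      rw [hfd y hy]
    simp only [lap, e1, e2]
  rw [hlap]
  simp only [lap]
  rw [second_formula U hU x₁ x₂ x₃ hsm₁ hsm₂ hsm₃ hpos z hz 1,
    second_formula U hU x₁ x₂ x₃ hsm₁ hsm₂ hsm₃ hpos z hz Complex.I]
  -- harmonicity: second y-derivatives are negatives of second x-derivatives
  have hL₁ := hharm₁ z hz
  have hL₂ := hharm₂ z hz
  have hL₃ := hharm₃ z hz
  simp only [lap] at hL₁ hL₂ hL₃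
  have e₁ : fderiv ℝ (fun w => fderiv ℝ x₁ w Complex.I) z Complex.I
      = - fderiv ℝ (fun w => fderiv ℝ x₁ w 1) z 1 := by linarith
  have e₂ : fderiv ℝ (fun w => fderiv ℝ x₂ w Complex.I) z Complex.I
      = - fderiv ℝ (fun w => fderiv ℝ x₂ w 1) z 1 := by linarith
  have e₃ : fderiv ℝ (fun w => fderiv ℝ x₃ w Complex.I) z Complex.I
      = - fderiv ℝ (fun w => fderiv ℝ x₃ w 1) z 1 := by linarith
  rw [e₁, e₂, e₃]
  have hc₁ := hconf₁ z hz
  have hc₂ := hconf₂ z hz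
  have hc₃ := hconf₃ z hz
  simp only [pdx, pdy] at hc₁ hc₂ hc₃
  have hne : x₁ z ^ 2 + x₂ z ^ 2 ≠ 0 := ne_of_gt (hpos z hz)
  have key := alg_key (fderiv ℝ x₁ z 1) (fderiv ℝ x₂ z 1) (fderiv ℝ x₃ z 1)
    (fderiv ℝ x₁ z Complex.I) (fderiv ℝ x₂ z Complex.I) (fderiv ℝ x₃ z Complex.I)
    (x₁ z) (x₂ z) hc₁ hc₂ hc₃ (hreg z hz)
  have key2 : ((fderiv ℝ x₁ z 1 ^2 + fderiv ℝ x₂ z 1 ^2 + fderiv ℝ x₁ z Complex.I ^2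
        + fderiv ℝ x₂ z Complex.I ^2) * (x₁ z ^2 + x₂ z ^2)
      - 2*((x₁ z * fderiv ℝ x₁ z 1 + x₂ z * fderiv ℝ x₂ z 1)^2
        + (x₁ z * fderiv ℝ x₁ z Complex.I + x₂ z * fderiv ℝ x₂ z Complex.I)^2)
      - 2*(fderiv ℝ x₃ z 1 ^2 + fderiv ℝ x₃ z Complex.I ^2) * (x₁ z ^2 + x₂ z ^2)^2)
      / (x₁ z ^2 + x₂ z ^2)^2 ≤ 0 := by
    apply div_nonpos_of_nonpos_of_nonneg _ (by positivity)
    linarith [key]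
  refine le_trans (le_of_eq ?_) key2
  field_simp
  ring
end

section
/- Let U ⊆ ℂ be open, let g, h : U → ℂ be holomorphic with g' nowhere zero on U. Then the complex-valued function f := g²·h'/g' + 2·g·h/(1 + |g|²) satisfies the Jacobi equation associated to g on U: Δf + (8|g'|²/(1 + |g|²)²)·f = 0. -/
/-!
The flat Laplacian factors as `Δ = 4 ∂∂̄` on `C²` functions, by symmetry of the second derivative.
In `f = g²h'/g' + 2gh/(1 + |g|²)` the first summand is holomorphic, so
`∂̄f = -2g²h ḡ'/(1 + |g|²)²`; applying `∂` to this and clearing denominators, `4 ∂∂̄f` cancels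
the potential term `8|g'|²/(1 + |g|²)² · f` exactly because `1 + |g|² = 1 + g ḡ`.
-/

open Complex

/-- Flat Laplacian `∂²/∂x² + ∂²/∂y²` on `ℂ ≅ ℝ²`, applied to a complex-valued function
(i.e. to its real and imaginary parts separately). -/
noncomputable def lapC (f : ℂ → ℂ) (z : ℂ) : ℂ :=
  fderiv ℝ (fun w => fderiv ℝ f w 1) z 1
    + fderiv ℝ (fun w => fderiv ℝ f w Complex.I) z Complex.I

open ComplexConjugate

/-- The real-linear map `v ↦ a v + b v̄`; a function with this derivative has Wirtinger
derivatives `∂f = a`, `∂̄f = b`. -/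
noncomputable def wirtingerCLM (a b : ℂ) : ℂ →L[ℝ] ℂ :=
  a • ContinuousLinearMap.id ℝ ℂ + b • conjCLE.toContinuousLinearMap

@[simp] theorem wirtingerCLM_apply (a b v : ℂ) : wirtingerCLM a b v = a * v + b * conj v := rfl

def HasWirtingerDerivAt (f : ℂ → ℂ) (a b z : ℂ) : Prop :=
  HasFDerivAt f (wirtingerCLM a b) z

section WirtingerCalculus

variable {f g : ℂ → ℂ} {a b c d z : ℂ}

theorem HasWirtingerDerivAt.congr_deriv {a' b' : ℂ} (h : HasWirtingerDerivAt f a b z)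
    (ha : a = a') (hb : b = b') : HasWirtingerDerivAt f a' b' z :=
  ha ▸ hb ▸ h

theorem HasDerivAt.hasWirtingerDerivAt (h : HasDerivAt f a z) : HasWirtingerDerivAt f a 0 z :=
  (h.hasFDerivAt.restrictScalars ℝ).congr_fderiv (by ext v; simp [mul_comm])

theorem AnalyticAt.hasWirtingerDerivAt (hf : AnalyticAt ℂ f z) :
    HasWirtingerDerivAt f (deriv f z) 0 z :=
  hf.differentiableAt.hasDerivAt.hasWirtingerDerivAt

theorem hasWirtingerDerivAt_const (c z : ℂ) : HasWirtingerDerivAt (fun _ => c) 0 0 z :=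
  (hasFDerivAt_const c z).congr_fderiv (by ext v; simp)

theorem HasWirtingerDerivAt.add (hf : HasWirtingerDerivAt f a b z)
    (hg : HasWirtingerDerivAt g c d z) :
    HasWirtingerDerivAt (fun w => f w + g w) (a + c) (b + d) z :=
  (HasFDerivAt.add hf hg).congr_fderiv (by ext v; simp; ring)

theorem HasWirtingerDerivAt.mul (hf : HasWirtingerDerivAt f a b z)
    (hg : HasWirtingerDerivAt g c d z) :
    HasWirtingerDerivAt (fun w => f w * g w) (f z * c + g z * a) (f z * d + g z * b) z :=
  (HasFDerivAt.mul hf hg).congr_fderiv (by ext v; simp; ring)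

theorem HasWirtingerDerivAt.pow (hf : HasWirtingerDerivAt f a b z) (n : ℕ) :
    HasWirtingerDerivAt (fun w => f w ^ n) (n * f z ^ (n - 1) * a) (n * f z ^ (n - 1) * b) z :=
  (HasFDerivAt.pow hf n).congr_fderiv (by ext v; simp; ring)

theorem HasWirtingerDerivAt.conj (hf : HasWirtingerDerivAt f a b z) :
    HasWirtingerDerivAt (fun w => conj (f w)) (conj b) (conj a) z :=
  (HasFDerivAt.star hf).congr_fderiv (by ext v; simp; ring)

theorem HasWirtingerDerivAt.inv (hf : HasWirtingerDerivAt f a b z) (hz : f z ≠ 0) :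
    HasWirtingerDerivAt (fun w => (f w)⁻¹) (-a / f z ^ 2) (-b / f z ^ 2) z :=
  ((hasFDerivAt_inv' hz).comp z hf).congr_fderiv (by ext v; simp; ring)

theorem HasWirtingerDerivAt.div (hf : HasWirtingerDerivAt f a b z)
    (hg : HasWirtingerDerivAt g c d z) (hz : g z ≠ 0) :
    HasWirtingerDerivAt (fun w => f w / g w) ((g z * a - f z * c) / g z ^ 2)
      ((g z * b - f z * d) / g z ^ 2) z := by
  simp only [div_eq_mul_inv]
  refine (hf.mul (hg.inv hz)).congr_deriv ?_ ?_ <;> field_simp <;> ring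

end WirtingerCalculus

theorem HasFDerivAt.hasFDerivAt_fderiv_apply {f : ℂ → ℂ} {f'' : ℂ →L[ℝ] ℂ →L[ℝ] ℂ} {z : ℂ}
    (h : HasFDerivAt (fderiv ℝ f) f'' z) (v : ℂ) :
    HasFDerivAt (fun w => fderiv ℝ f w v) (f''.flip v) z := by
  simpa using h.clm_apply (hasFDerivAt_const v z)

/-- `Δ = 4 ∂∂̄`: differentiating `∂̄f = (f_x + i f_y)/2` in the directions `1` and `i` gives
`f_xx + i f_xy` and `f_yx + i f_yy`, and the mixed terms cancel by symmetry. -/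
theorem lapC_eq_four_mul_of_hasWirtingerDerivAt {f s : ℂ → ℂ} {z P S : ℂ}
    (hf : ContDiffAt ℝ 2 f z) (hs : ∀ᶠ w in nhds z, ∃ p, HasWirtingerDerivAt f p (s w) w)
    (hP : HasWirtingerDerivAt s P S z) : lapC f z = 4 * P := by
  set f'' := fderiv ℝ (fderiv ℝ f) z
  have h2 : HasFDerivAt (fderiv ℝ f) f'' z :=
    ((hf.fderiv_right (m := 1) le_rfl).differentiableAt one_ne_zero).hasFDerivAt
  have hsymm : f'' 1 I = f'' I 1 := hf.isSymmSndFDerivAt (by simp) 1 I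
  have hdbar : (fun w => fderiv ℝ f w 1 + I * fderiv ℝ f w I) =ᶠ[nhds z] fun w => 2 * s w := by
    filter_upwards [hs] with w ⟨p, hp⟩
    rw [hp.fderiv, wirtingerCLM_apply, wirtingerCLM_apply, map_one, conj_I]
    linear_combination (p - s w) * I_mul_I
  have hD := ((h2.hasFDerivAt_fderiv_apply 1).add
    ((h2.hasFDerivAt_fderiv_apply I).const_mul I)).congr_of_eventuallyEq hdbar.symm
  have hD_eq := hD.unique (hP.const_mul 2)
  have h1 := congrArg (· 1) hD_eq
  have hI := congrArg (· I) hD_eq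
  simp only [add_apply, smul_apply, ContinuousLinearMap.flip_apply, wirtingerCLM_apply,
    smul_eq_mul, map_one, conj_I] at h1 hI
  rw [lapC, (h2.hasFDerivAt_fderiv_apply 1).fderiv, (h2.hasFDerivAt_fderiv_apply I).fderiv]
  simp only [ContinuousLinearMap.flip_apply]
  linear_combination h1 - I * hI - I * hsymm + (f'' I I - 2 * P + 2 * S) * I_mul_I

theorem ofReal_one_add_norm_sq (w : ℂ) : ((1 + ‖w‖ ^ 2 : ℝ) : ℂ) = 1 + w * conj w := by
  push_cast
  rw [mul_conj']

theorem one_add_mul_conj_ne_zero (w : ℂ) : 1 + w * conj w ≠ 0 := by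
  rw [← ofReal_one_add_norm_sq]
  exact_mod_cast (by positivity : (1 + ‖w‖ ^ 2 : ℝ) ≠ 0)

theorem ContDiffAt.conj {f : ℂ → ℂ} {z : ℂ} {n : WithTop ℕ∞} (hf : ContDiffAt ℝ n f z) :
    ContDiffAt ℝ n (fun w => conj (f w)) z :=
  conjCLE.contDiff.contDiffAt.comp z hf

theorem AnalyticAt.hasWirtingerDerivAt_one_add_mul_conj {g : ℂ → ℂ} {z : ℂ}
    (hg : AnalyticAt ℂ g z) :
    HasWirtingerDerivAt (fun w => 1 + g w * conj (g w)) (deriv g z * conj (g z))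
      (g z * conj (deriv g z)) z :=
  ((hasWirtingerDerivAt_const 1 z).add (hg.hasWirtingerDerivAt.mul
    hg.hasWirtingerDerivAt.conj)).congr_deriv (by simp; ring) (by simp)

section DeformationFunction

variable {g h : ℂ → ℂ} {z : ℂ}

noncomputable def deformationFunction (g h : ℂ → ℂ) (w : ℂ) : ℂ :=
  g w ^ 2 * deriv h w / deriv g w + 2 * g w * h w / ((1 + ‖g w‖ ^ 2 : ℝ) : ℂ)

theorem deformationFunction_eq (g h : ℂ → ℂ) : deformationFunction g h =
    fun w => g w ^ 2 * deriv h w / deriv g w + 2 * g w * h w / (1 + g w * conj (g w)) :=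
  funext fun w => by rw [deformationFunction, ofReal_one_add_norm_sq]

theorem contDiffAt_deformationFunction (hg : AnalyticAt ℂ g z) (hh : AnalyticAt ℂ h z)
    (hg' : deriv g z ≠ 0) : ContDiffAt ℝ 2 (deformationFunction g h) z := by
  have hg₀ := hg.contDiffAt.restrict_scalars ℝ (n := 2)
  have hh₀ := hh.contDiffAt.restrict_scalars ℝ (n := 2)
  have hg₁ := hg.deriv.contDiffAt.restrict_scalars ℝ (n := 2)
  have hh₁ := hh.deriv.contDiffAt.restrict_scalars ℝ (n := 2)
  have hg₀_conj := hg₀.conj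
  have hQ := one_add_mul_conj_ne_zero (g z)
  simp only [deformationFunction_eq, div_eq_mul_inv]
  fun_prop (disch := assumption)

/-- The holomorphic summand `g²h'/g'` contributes nothing to `∂̄`. -/
theorem hasWirtingerDerivAt_deformationFunction (hg : AnalyticAt ℂ g z)
    (hh : AnalyticAt ℂ h z) (hg' : deriv g z ≠ 0) :
    ∃ p, HasWirtingerDerivAt (deformationFunction g h) p
      (-2 * g z ^ 2 * h z * conj (deriv g z) / (1 + g z * conj (g z)) ^ 2) z := by
  have hQ := one_add_mul_conj_ne_zero (g z)
  have hf := ((hg.hasWirtingerDerivAt.pow 2).mul hh.deriv.hasWirtingerDerivAt).div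
    hg.deriv.hasWirtingerDerivAt hg' |>.add
    ((((hasWirtingerDerivAt_const 2 z).mul hg.hasWirtingerDerivAt).mul
      hh.hasWirtingerDerivAt).div hg.hasWirtingerDerivAt_one_add_mul_conj hQ)
  rw [deformationFunction_eq]
  exact ⟨_, hf.congr_deriv rfl (by field_simp; ring)⟩

theorem hasWirtingerDerivAt_dbar_deformationFunction (hg : AnalyticAt ℂ g z)
    (hh : AnalyticAt ℂ h z) :
    ∃ S, HasWirtingerDerivAt
      (fun w => -2 * g w ^ 2 * h w * conj (deriv g w) / (1 + g w * conj (g w)) ^ 2)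
      (-2 * conj (deriv g z) *
        ((2 * g z * deriv g z * h z + g z ^ 2 * deriv h z) / (1 + g z * conj (g z)) ^ 2
          - 2 * g z ^ 2 * h z * deriv g z * conj (g z) / (1 + g z * conj (g z)) ^ 3)) S z := by
  have hQ := one_add_mul_conj_ne_zero (g z)
  have hs := ((((hasWirtingerDerivAt_const (-2) z).mul (hg.hasWirtingerDerivAt.pow 2)).mul
    hh.hasWirtingerDerivAt).mul hg.deriv.hasWirtingerDerivAt.conj).div
    (hg.hasWirtingerDerivAt_one_add_mul_conj.pow 2) (pow_ne_zero 2 hQ)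
  exact ⟨_, hs.congr_deriv (by norm_num; field_simp; ring) rfl⟩

end DeformationFunction

/-- For holomorphic `g, h` with `g'` nowhere zero, the complex-valued function
`f = g²h'/g' + 2gh/(1 + |g|²)` satisfies the Jacobi equation
`Δf + (8|g'|²/(1 + |g|²)²) f = 0` associated to `g`. -/
theorem deformation_function_is_complex_jacobi_function
    (U : Set ℂ) (hU : IsOpen U) (g h : ℂ → ℂ)
    (hg : DifferentiableOn ℂ g U) (hh : DifferentiableOn ℂ h U)
    (hg' : ∀ z ∈ U, deriv g z ≠ 0) :
    ∀ z ∈ U,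
      lapC (fun w =>
          (g w) ^ 2 * deriv h w / deriv g w
            + 2 * g w * h w / ((1 + ‖g w‖ ^ 2 : ℝ) : ℂ)) z
        + ((8 * ‖deriv g z‖ ^ 2 / (1 + ‖g z‖ ^ 2) ^ 2 : ℝ) : ℂ)
          * ((g z) ^ 2 * deriv h z / deriv g z
            + 2 * g z * h z / ((1 + ‖g z‖ ^ 2 : ℝ) : ℂ)) = 0 := by
  intro z hz
  have hga : ∀ w ∈ U, AnalyticAt ℂ g w := fun w hw => hg.analyticAt (hU.mem_nhds hw)
  have hha : ∀ w ∈ U, AnalyticAt ℂ h w := fun w hw => hh.analyticAt (hU.mem_nhds hw)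
  have hdbar := Filter.eventually_of_mem (hU.mem_nhds hz) fun w hw =>
    hasWirtingerDerivAt_deformationFunction (hga w hw) (hha w hw) (hg' w hw)
  obtain ⟨S, hs⟩ := hasWirtingerDerivAt_dbar_deformationFunction (hga z hz) (hha z hz)
  have hlap := lapC_eq_four_mul_of_hasWirtingerDerivAt
    (contDiffAt_deformationFunction (hga z hz) (hha z hz) (hg' z hz)) hdbar hs
  change lapC (deformationFunction g h) z + _ * deformationFunction g h z = 0
  rw [hlap, deformationFunction_eq]
  push_cast
  rw [← mul_conj', ← mul_conj']
  have hQ := one_add_mul_conj_ne_zero (g z)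
  have hgz := hg' z hz
  field_simp
  ring
end

section
/- Let U ⊆ ℂ be open and let g : U → ℂ be holomorphic with g and g' nowhere zero on U. Set h_S := (i/2)·(g')²/g³. Then on U one has the identity ( g³·h_S'/(2g') )' = (i/2)·( g''' − 3·g'·g''/g + (3/2)·(g')³/g² ). (This identifies the infinitesimal deformation ġ_S of the Weierstrass data associated to the Shiffman function, Corollary 6.14 of the paper.) -/
/-!
Differentiating `h_S` and multiplying by `g³/(2g')`, the factor `g'` cancels and the quotient
`g³ h_S'/(2g')` agrees near every point of `U` with `(i/4)(2g'' − 3g'²/g)`; differentiating this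
simpler expression gives the claim.
-/

open Complex Filter Topology

section
variable {𝕜 : Type*} [NontriviallyNormedField 𝕜] {g g₁ g₂ g₃ : 𝕜 → 𝕜} {x : 𝕜} (c : 𝕜)

theorem hasDerivAt_const_mul_sq_div_cube (hg : HasDerivAt g (g₁ x) x)
    (hg₁ : HasDerivAt g₁ (g₂ x) x) (hx : g x ≠ 0) :
    HasDerivAt (fun y => c * g₁ y ^ 2 / g y ^ 3)
      (c * g₁ x * (2 * g₂ x * g x - 3 * g₁ x ^ 2) / g x ^ 4) x := by
  refine (((hg₁.fun_pow 2).const_mul c).fun_div (hg.fun_pow 3) (pow_ne_zero 3 hx)).congr_deriv ?_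
  field_simp
  ring

theorem hasDerivAt_const_mul_two_mul_sub_sq_div (hg : HasDerivAt g (g₁ x) x)
    (hg₁ : HasDerivAt g₁ (g₂ x) x) (hg₂ : HasDerivAt g₂ (g₃ x) x) (hx : g x ≠ 0) :
    HasDerivAt (fun y => c * (2 * g₂ y - 3 * (g₁ y ^ 2 / g y)))
      (c * (2 * g₃ x - 3 * ((2 * g₁ x * g₂ x * g x - g₁ x ^ 3) / g x ^ 2))) x := by
  refine (((hg₂.const_mul 2).fun_sub (((hg₁.fun_pow 2).fun_div hg hx).const_mul 3)).const_mul
    c).congr_deriv ?_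
  field_simp
  ring

theorem deriv_cube_mul_deriv_sq_div_cube_div
    (hg : ∀ᶠ y in 𝓝 x, HasDerivAt g (g₁ y) y) (hg₁ : ∀ᶠ y in 𝓝 x, HasDerivAt g₁ (g₂ y) y)
    (hg₂ : HasDerivAt g₂ (g₃ x) x) (hg0 : ∀ᶠ y in 𝓝 x, g y ≠ 0)
    (hg₁0 : ∀ᶠ y in 𝓝 x, g₁ y ≠ 0) :
    deriv (fun y => g y ^ 3 * deriv (fun ζ => c * g₁ ζ ^ 2 / g ζ ^ 3) y / (2 * g₁ y)) x
      = c / 2 * (2 * g₃ x - 3 * ((2 * g₁ x * g₂ x * g x - g₁ x ^ 3) / g x ^ 2)) := by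
  have hquot : (fun y => g y ^ 3 * deriv (fun ζ => c * g₁ ζ ^ 2 / g ζ ^ 3) y / (2 * g₁ y))
      =ᶠ[𝓝 x] fun y => c / 2 * (2 * g₂ y - 3 * (g₁ y ^ 2 / g y)) := by
    filter_upwards [hg, hg₁, hg0, hg₁0] with y hgy hg₁y hy hy₁
    rw [(hasDerivAt_const_mul_sq_div_cube c hgy hg₁y hy).deriv]
    field_simp
  rw [hquot.deriv_eq]
  exact (hasDerivAt_const_mul_two_mul_sub_sq_div (c / 2) hg.self_of_nhds hg₁.self_of_nhds hg₂
    hg0.self_of_nhds).deriv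

end

/-- For the choice `h_S = (i/2)(g')²/g³` corresponding to the Shiffman function, the
infinitesimal deformation `ġ(h_S) = (g³ h_S'/(2g'))'` equals
`(i/2)(g''' − 3g'g''/g + (3/2)(g')³/g²)`. -/
theorem shiffman_infinitesimal_deformation_of_gauss_map
    (U : Set ℂ) (hU : IsOpen U) (g : ℂ → ℂ)
    (hg : DifferentiableOn ℂ g U)
    (hg0 : ∀ z ∈ U, g z ≠ 0) (hg'0 : ∀ z ∈ U, deriv g z ≠ 0) :
    ∀ z ∈ U,
      deriv (fun w =>
          (g w) ^ 3 * deriv (fun ζ => (Complex.I / 2) * (deriv g ζ) ^ 2 / (g ζ) ^ 3) w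
            / (2 * deriv g w)) z
        = (Complex.I / 2) * (deriv (deriv (deriv g)) z
            - 3 * deriv g z * deriv (deriv g) z / g z
            + (3 / 2) * (deriv g z) ^ 3 / (g z) ^ 2) := by
  intro z hz
  have hg₀ : AnalyticOnNhd ℂ g U := hg.analyticOnNhd hU
  have hg₁ : AnalyticOnNhd ℂ (deriv g) U := hg₀.deriv
  have hg₂ : AnalyticOnNhd ℂ (deriv (deriv g)) U := hg₁.deriv
  have hUz : ∀ᶠ w in 𝓝 z, w ∈ U := hU.mem_nhds hz
  rw [deriv_cube_mul_deriv_sq_div_cube_div (I / 2)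
    (hUz.mono fun w hw => (hg₀ w hw).differentiableAt.hasDerivAt)
    (hUz.mono fun w hw => (hg₁ w hw).differentiableAt.hasDerivAt)
    (hg₂ z hz).differentiableAt.hasDerivAt (hUz.mono hg0) (hUz.mono hg'0)]
  field_simp [hg0 z hz]
  ring
end

section
/- Let U ⊆ ℂ be open and connected and let g : U → ℂ be holomorphic and nowhere zero, satisfying g''' − 3·g'·g''/g + (3/2)·(g')³/g² = 0 on U. Then there exist constants α, β ∈ ℂ such that (g')² = β·g³ + α·g on U. (Equivalently, the function h_S = (i/2)(g')²/g³ has the form b − c/g² for constants b, c ∈ ℂ; this is the situation in which the infinitesimal Shiffman deformation ġ_S vanishes and the Shiffman function is linear, Corollary 6.14(3) of the paper.) -/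
/-!
The quantity `K = (2 g g'' - g'²) / g³` has derivative `2 (g''' - 3 g' g'' / g + (3/2) g'³ / g²) / g²`,
so on the connected set `U` it is a constant `2β`. Then `(g'² / g - β g²)' = g g' (K - 2β) = 0`,
so `g'² / g - β g²` is a constant `α`.
-/

section
variable {𝕜 : Type*} [NontriviallyNormedField 𝕜] {g g₁ g₂ : 𝕜 → 𝕜} {g₃ z : 𝕜}

theorem hasDerivAt_two_mul_mul_sub_sq_div_cube [NeZero (2 : 𝕜)] (hg : HasDerivAt g (g₁ z) z)
    (hg₁ : HasDerivAt g₁ (g₂ z) z) (hg₂ : HasDerivAt g₂ g₃ z) (hz : g z ≠ 0) :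
    HasDerivAt (fun w => (2 * g w * g₂ w - g₁ w ^ 2) / g w ^ 3)
      (2 * (g₃ - 3 * g₁ z * g₂ z / g z + 3 / 2 * g₁ z ^ 3 / g z ^ 2) / g z ^ 2) z := by
  refine ((((hg.const_mul 2).mul hg₂).sub (hg₁.pow 2)).div (hg.pow 3)
    (pow_ne_zero 3 hz)).congr_deriv ?_
  simp only [Pi.pow_apply, Pi.mul_apply, Pi.sub_apply]
  field_simp
  ring

theorem hasDerivAt_sq_div_sub_mul_sq (c : 𝕜) (hg : HasDerivAt g (g₁ z) z)
    (hg₁ : HasDerivAt g₁ (g₂ z) z) (hz : g z ≠ 0) :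
    HasDerivAt (fun w => g₁ w ^ 2 / g w - c * g w ^ 2)
      (g z * g₁ z * ((2 * g z * g₂ z - g₁ z ^ 2) / g z ^ 3 - 2 * c)) z := by
  refine (((hg₁.pow 2).div hg hz).sub ((hg.pow 2).const_mul c)).congr_deriv ?_
  simp only [Pi.pow_apply]
  field_simp
  ring

end

theorem IsOpen.exists_eq_const_of_hasDerivAt_zero {𝕜 : Type*} [RCLike 𝕜] {f : 𝕜 → 𝕜}
    {s : Set 𝕜} (hs : IsOpen s) (hs' : IsPreconnected s) (hf : ∀ x ∈ s, HasDerivAt f 0 x) :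
    ∃ a, ∀ x ∈ s, f x = a :=
  hs.exists_is_const_of_deriv_eq_zero hs'
    (fun x hx => (hf x hx).differentiableAt.differentiableWithinAt) fun x hx => (hf x hx).deriv

/-- If the Shiffman infinitesimal deformation of a nowhere-zero holomorphic `g`
vanishes, i.e. `g''' − 3g'g''/g + (3/2)(g')³/g² = 0` on a connected open set, then
`(g')² = β g³ + α g` for some constants `α, β ∈ ℂ`. -/
theorem vanishing_shiffman_deformation_gives_elliptic_ode
    (U : Set ℂ) (hU : IsOpen U) (hconn : IsConnected U)
    (g : ℂ → ℂ) (hg : DifferentiableOn ℂ g U) (hg0 : ∀ z ∈ U, g z ≠ 0)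
    (hS : ∀ z ∈ U,
      deriv (deriv (deriv g)) z - 3 * deriv g z * deriv (deriv g) z / g z
        + (3 / 2) * (deriv g z) ^ 3 / (g z) ^ 2 = 0) :
    ∃ α β : ℂ, ∀ z ∈ U, (deriv g z) ^ 2 = β * (g z) ^ 3 + α * g z := by
  have hA : AnalyticOnNhd ℂ g U := hg.analyticOnNhd hU
  have hd {f : ℂ → ℂ} (hf : AnalyticOnNhd ℂ f U) (z : ℂ) (hz : z ∈ U) :
      HasDerivAt f (deriv f z) z :=
    (hf z hz).differentiableAt.hasDerivAt
  obtain ⟨c, hc⟩ := hU.exists_eq_const_of_hasDerivAt_zero hconn.isPreconnected fun z hz => by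
    simpa [hS z hz] using hasDerivAt_two_mul_mul_sub_sq_div_cube (hd hA z hz)
      (hd hA.deriv z hz) (hd hA.deriv.deriv z hz) (hg0 z hz)
  obtain ⟨α, hα⟩ := hU.exists_eq_const_of_hasDerivAt_zero hconn.isPreconnected fun z hz => by
    simpa [hc z hz, mul_div_cancel₀ c two_ne_zero] using
      hasDerivAt_sq_div_sub_mul_sq (c / 2) (hd hA z hz) (hd hA.deriv z hz) (hg0 z hz)
  refine ⟨α, c / 2, fun z hz => ?_⟩
  have h := hα z hz
  field_simp [hg0 z hz] at h
  linear_combination h / 2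
end

section
/- Let U ⊆ ℂ be open and connected, let g : U → ℂ be holomorphic, nonconstant and nowhere zero, and let a₁, a₂, a₃ ∈ ℂ be such that on U the identity (3/2)·(g'/g)² − g''/g − (1/(1 + |g|²))·(g'/g)² = ( a₁·(g + conj(g)) − i·a₂·(g − conj(g)) + a₃·(|g|² − 1) )/(1 + |g|²) holds. Then, setting A := a₁ − i·a₂ and B := a₁ + i·a₂, the following hold on U: (3/2)·(g')²/g − g'' − B − a₃·g = 0, g''/g − (1/2)·(g'/g)² + A·g − a₃ = 0, and consequently (g')² = g·(−A·g² + 2·a₃·g + B). -/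
/-!
Writing `‖g‖² = g ḡ` and clearing denominators, the hypothesis becomes `F = ḡ · G`, where
`G = (3/2)(g')²/g − g'' − B − a₃ g` and `F = g''/g − (1/2)(g'/g)² + A g − a₃` are holomorphic.
Where `G ≠ 0`, `ḡ = F / G` is holomorphic as well, so `g' = 0` there; by the identity theorem
`g' = 0` on all of `U` and `g` would be constant. Hence `G ≡ 0`, then `F ≡ 0`, and eliminating
`g''` between the two equations gives `(g')² = g(−A g² + 2a₃ g + B)`.
-/

open Complex ComplexConjugate

-- The real derivative of `conj ∘ f` is both `h ↦ (conj ∘ f)' h` and `h ↦ conj (f' h)`;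
-- evaluating at `1` and at `I` forces `conj f' = -conj f'`.
theorem deriv_eq_zero_of_differentiableAt_conj_comp {f : ℂ → ℂ} {z : ℂ}
    (hf : DifferentiableAt ℂ f z) (hcf : DifferentiableAt ℂ (conj ∘ f) z) :
    deriv f z = 0 := by
  have hreal := (hcf.hasDerivAt.hasFDerivAt.restrictScalars ℝ).unique
    ((conjCLE : ℂ →L[ℝ] ℂ).hasFDerivAt.comp z (hf.hasDerivAt.hasFDerivAt.restrictScalars ℝ))
  have h1 := DFunLike.congr_fun hreal 1
  have hI := DFunLike.congr_fun hreal I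
  simp only [ContinuousLinearMap.coe_restrictScalars', ContinuousLinearMap.toSpanSingleton_apply,
    smul_eq_mul, one_mul, ContinuousLinearMap.comp_apply, ContinuousLinearEquiv.coe_coe,
    ContinuousAlgEquiv.coeCLE_apply, conjCAE_apply, map_mul, conj_I, neg_mul] at h1 hI
  rw [h1] at hI
  have : 2 * I * conj (deriv f z) = 0 := by linear_combination hI
  simpa using this

theorem exists_eqOn_const_of_differentiableOn_conj_comp {U S : Set ℂ} {g : ℂ → ℂ} (hU : IsOpen U)
    (hUc : IsPreconnected U) (hg : DifferentiableOn ℂ g U) (hS : IsOpen S) (hSU : S ⊆ U)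
    (hSne : S.Nonempty) (hcg : DifferentiableOn ℂ (conj ∘ g) S) :
    ∃ c, Set.EqOn g (fun _ => c) U := by
  obtain ⟨z₀, hz₀⟩ := hSne
  have hderivS : ∀ z ∈ S, deriv g z = 0 := fun z hz =>
    deriv_eq_zero_of_differentiableAt_conj_comp (hg.differentiableAt (hU.mem_nhds (hSU hz)))
      (hcg.differentiableAt (hS.mem_nhds hz))
  have hderivU : Set.EqOn (deriv g) 0 U :=
    (hg.analyticOnNhd hU).deriv.eqOn_zero_of_preconnected_of_eventuallyEq_zero hUc (hSU hz₀)
      (Filter.mem_of_superset (hS.mem_nhds hz₀) hderivS)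
  exact hU.exists_is_const_of_deriv_eq_zero hUc hg hderivU

theorem forall_eq_zero_of_eq_conj_mul {U : Set ℂ} {g F G : ℂ → ℂ} (hU : IsOpen U)
    (hUc : IsPreconnected U) (hg : DifferentiableOn ℂ g U)
    (hnc : ¬ ∃ c : ℂ, Set.EqOn g (fun _ => c) U)
    (hF : DifferentiableOn ℂ F U) (hG : DifferentiableOn ℂ G U)
    (hFG : ∀ z ∈ U, F z = conj (g z) * G z) :
    ∀ z ∈ U, G z = 0 := by
  by_contra! ⟨z₀, hz₀U, hz₀⟩
  set S := U ∩ G ⁻¹' {0}ᶜ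
  have hS : IsOpen S := hG.continuousOn.isOpen_inter_preimage hU isOpen_compl_singleton
  have hcg : DifferentiableOn ℂ (conj ∘ g) S := by
    refine ((hF.mono Set.inter_subset_left).div (hG.mono Set.inter_subset_left)
      fun z hz => hz.2).congr fun z hz => ?_
    rw [Function.comp_apply, Pi.div_apply, hFG z hz.1, mul_div_cancel_right₀ _ hz.2]
  exact hnc (exists_eqOn_const_of_differentiableOn_conj_comp hU hUc hg hS Set.inter_subset_left
    ⟨z₀, hz₀U, hz₀⟩ hcg)

theorem ode_residual_eq_conj_mul_of_shiffman_eq {w d₁ d₂ a₁ a₂ a₃ : ℂ} (hw : w ≠ 0)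
    (h : 3 / 2 * (d₁ / w) ^ 2 - d₂ / w - 1 / ((1 + ‖w‖ ^ 2 : ℝ) : ℂ) * (d₁ / w) ^ 2
      = (a₁ * (w + conj w) - I * a₂ * (w - conj w) + a₃ * ((‖w‖ ^ 2 - 1 : ℝ) : ℂ))
        / ((1 + ‖w‖ ^ 2 : ℝ) : ℂ)) :
    d₂ / w - 1 / 2 * (d₁ / w) ^ 2 + (a₁ - I * a₂) * w - a₃
      = conj w * (3 / 2 * d₁ ^ 2 / w - d₂ - (a₁ + I * a₂) - a₃ * w) := by
  have hnorm : ((‖w‖ ^ 2 : ℝ) : ℂ) = w * conj w := by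
    rw [mul_conj, normSq_eq_norm_sq]
  have hden : (1 : ℂ) + w * conj w ≠ 0 := by
    rw [← hnorm]; exact_mod_cast (by positivity : (1 + ‖w‖ ^ 2 : ℝ) ≠ 0)
  push_cast [hnorm] at h
  field_simp at h ⊢
  linear_combination -h

theorem sq_deriv_eq_of_ode_pair {w d₁ d₂ A B a₃ : ℂ} (hw : w ≠ 0)
    (h₁ : 3 / 2 * d₁ ^ 2 / w - d₂ - B - a₃ * w = 0)
    (h₂ : d₂ / w - 1 / 2 * (d₁ / w) ^ 2 + A * w - a₃ = 0) :
    d₁ ^ 2 = w * (-A * w ^ 2 + 2 * a₃ * w + B) := by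
  field_simp at h₁ h₂
  linear_combination (h₁ + h₂) / 2

/-- If the complex Shiffman expression of a nonconstant, nowhere-zero holomorphic `g`
equals the linear function `⟨N, a⟩` of the Gauss map with coefficients
`a = (a₁, a₂, a₃)`, then, with `A = a₁ − i a₂` and `B = a₁ + i a₂`, the function `g`
satisfies `(3/2)(g')²/g − g'' − B − a₃ g = 0`, `g''/g − (1/2)(g'/g)² + A g − a₃ = 0`,
and consequently `(g')² = g(−A g² + 2a₃ g + B)`. -/
theorem linear_shiffman_function_gives_ode_for_gauss_map
    (U : Set ℂ) (hU : IsOpen U) (hconn : IsConnected U)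
    (g : ℂ → ℂ) (hg : DifferentiableOn ℂ g U) (hg0 : ∀ z ∈ U, g z ≠ 0)
    (hnc : ¬ ∃ c : ℂ, Set.EqOn g (fun _ => c) U)
    (a₁ a₂ a₃ : ℂ)
    (hW : ∀ z ∈ U,
      (3 / 2) * (deriv g z / g z) ^ 2 - deriv (deriv g) z / g z
          - (1 / ((1 + ‖g z‖ ^ 2 : ℝ) : ℂ)) * (deriv g z / g z) ^ 2
        = (a₁ * (g z + (starRingEnd ℂ) (g z))
            - Complex.I * a₂ * (g z - (starRingEnd ℂ) (g z))
            + a₃ * ((‖g z‖ ^ 2 - 1 : ℝ) : ℂ))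
          / ((1 + ‖g z‖ ^ 2 : ℝ) : ℂ)) :
    ∀ z ∈ U,
      (3 / 2) * (deriv g z) ^ 2 / g z - deriv (deriv g) z
          - (a₁ + Complex.I * a₂) - a₃ * g z = 0 ∧
      deriv (deriv g) z / g z - (1 / 2) * (deriv g z / g z) ^ 2
          + (a₁ - Complex.I * a₂) * g z - a₃ = 0 ∧
      (deriv g z) ^ 2
        = g z * (-(a₁ - Complex.I * a₂) * (g z) ^ 2 + 2 * a₃ * g z + (a₁ + Complex.I * a₂)) := by
  have hg₁ : DifferentiableOn ℂ (deriv g) U := (hg.analyticOnNhd hU).deriv.differentiableOn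
  have hg₂ : DifferentiableOn ℂ (deriv (deriv g)) U :=
    (hg.analyticOnNhd hU).deriv.deriv.differentiableOn
  have hresidual (z) (hz : z ∈ U) := ode_residual_eq_conj_mul_of_shiffman_eq (hg0 z hz) (hW z hz)
  have hode₁ := forall_eq_zero_of_eq_conj_mul hU hconn.isPreconnected hg hnc
    (by fun_prop (disch := exact hg0)) (by fun_prop (disch := exact hg0)) hresidual
  intro z hz
  have h₁ := hode₁ z hz
  have h₂ := (hresidual z hz).trans (by rw [h₁, mul_zero])
  exact ⟨h₁, h₂, sq_deriv_eq_of_ode_pair (hg0 z hz) h₁ h₂⟩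
end

section
/- Let Ω ⊆ ℂ × ℂ be open and let y : Ω → ℂ be holomorphic in both variables (z, t) and nowhere zero. Define u := −(∂²y/∂z²)/y on Ω, and assume that y satisfies the evolution equation ∂y/∂t = (∂u/∂z)·y − 2·u·(∂y/∂z) on Ω. Then u satisfies the KdV equation ∂u/∂t = −∂³u/∂z³ − 6·u·(∂u/∂z) on Ω. -/
open Complex

/-- Partial derivative in the first (space, `z`) variable of a function on `ℂ × ℂ`. -/
noncomputable def dz (f : ℂ × ℂ → ℂ) (p : ℂ × ℂ) : ℂ := fderiv ℂ f p (1, 0)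

/-- Partial derivative in the second (time, `t`) variable of a function on `ℂ × ℂ`. -/
noncomputable def dt (f : ℂ × ℂ → ℂ) (p : ℂ × ℂ) : ℂ := fderiv ℂ f p (0, 1)

/-- The Schrödinger potential `u = −(∂²y/∂z²)/y` of a nowhere-zero function `y(z,t)`. -/
noncomputable def schrodingerPotential (y : ℂ × ℂ → ℂ) : ℂ × ℂ → ℂ := fun p =>
  -(dz (dz y) p) / y p

/-!
Differentiating the Schrödinger equation `y'' = -u y` in `t`, differentiating the evolution
equation twice in `z`, and using that the mixed partials `∂t (y'')` and `(∂t y)''` of the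
holomorphic `y` agree, gives `-(u_t y + u y_t) = u''' y - 3 u' y'' - 2 u y'''`. Eliminating
`y_t`, `y''` and `y'''` with the two equations leaves `-u_t y = (u''' + 6 u u') y`, and `y ≠ 0`.
-/

open Set

section PartialDerivatives

variable {f g : ℂ × ℂ → ℂ} {s : Set (ℂ × ℂ)} {p : ℂ × ℂ}

@[fun_prop]
theorem AnalyticAt.dz (hf : AnalyticAt ℂ f p) : AnalyticAt ℂ (dz f) p :=
  ((ContinuousLinearMap.apply ℂ ℂ ((1, 0) : ℂ × ℂ)).analyticAt _).comp hf.fderiv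

theorem Set.EqOn.dz (hs : IsOpen s) (h : EqOn f g s) : EqOn (dz f) (dz g) s := fun p hp => by
  simp only [_root_.dz, (h.eventuallyEq_of_mem (hs.mem_nhds hp)).fderiv_eq]

theorem Set.EqOn.dt (hs : IsOpen s) (h : EqOn f g s) : EqOn (dt f) (dt g) s := fun p hp => by
  simp only [_root_.dt, (h.eventuallyEq_of_mem (hs.mem_nhds hp)).fderiv_eq]

theorem dz_const (c : ℂ) : dz (fun _ => c) p = 0 := by
  simp [dz]

theorem dz_fun_neg : dz (fun q => -f q) p = -dz f p := by
  simp [dz]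

theorem dt_fun_neg : dt (fun q => -f q) p = -dt f p := by
  simp [dt]

theorem dz_fun_sub (hf : DifferentiableAt ℂ f p) (hg : DifferentiableAt ℂ g p) :
    dz (fun q => f q - g q) p = dz f p - dz g p := by
  simp [dz, fderiv_fun_sub hf hg]

theorem dz_fun_mul (hf : DifferentiableAt ℂ f p) (hg : DifferentiableAt ℂ g p) :
    dz (fun q => f q * g q) p = dz f p * g p + f p * dz g p := by
  simp [dz, fderiv_fun_mul hf hg]
  ring

theorem dt_fun_mul (hf : DifferentiableAt ℂ f p) (hg : DifferentiableAt ℂ g p) :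
    dt (fun q => f q * g q) p = dt f p * g p + f p * dt g p := by
  simp [dt, fderiv_fun_mul hf hg]
  ring

theorem fderiv_fderiv_apply_comm {E F : Type*} [NormedAddCommGroup E] [NormedSpace ℂ E]
    [NormedAddCommGroup F] [NormedSpace ℂ F] [CompleteSpace F] {f : E → F} {p : E}
    (hf : AnalyticAt ℂ f p) (v w : E) :
    fderiv ℂ (fun q => fderiv ℂ f q v) p w = fderiv ℂ (fun q => fderiv ℂ f q w) p v := by
  have hf' : DifferentiableAt ℂ (fderiv ℂ f) p := hf.fderiv.differentiableAt
  rw [fderiv_clm_apply hf' (differentiableAt_const v),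
    fderiv_clm_apply hf' (differentiableAt_const w)]
  simpa using (hf.contDiffAt (n := ⊤)).isSymmSndFDerivAt le_top w v

theorem dz_dt_comm (hf : AnalyticAt ℂ f p) : dz (dt f) p = dt (dz f) p :=
  fderiv_fderiv_apply_comm hf (0, 1) (1, 0)

theorem dt_dz_dz_eq_dz_dz_dt (hs : IsOpen s) (hf : AnalyticOnNhd ℂ f s) (hp : p ∈ s) :
    dt (dz (dz f)) p = dz (dz (dt f)) p := by
  have hcomm : EqOn (dz (dt f)) (dt (dz f)) s := fun q hq => dz_dt_comm (hf q hq)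
  rw [← dz_dt_comm (hf p hp).dz, hcomm.dz hs hp]

end PartialDerivatives

section Schrodinger

variable {Ω : Set (ℂ × ℂ)} {u y : ℂ × ℂ → ℂ} {p : ℂ × ℂ}

theorem AnalyticAt.schrodingerPotential (hy : AnalyticAt ℂ y p) (hy0 : y p ≠ 0) :
    AnalyticAt ℂ (schrodingerPotential y) p :=
  hy.dz.dz.neg.div hy hy0

theorem dz_dz_eq_neg_schrodingerPotential_mul (hy0 : y p ≠ 0) :
    dz (dz y) p = -(schrodingerPotential y p * y p) := by
  simp only [schrodingerPotential]
  field_simp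

theorem dz_evolution_rhs (hu : AnalyticAt ℂ u p) (hy : AnalyticAt ℂ y p) :
    dz (fun q => dz u q * y q - 2 * u q * dz y q) p
      = dz (dz u) p * y p - dz u p * dz y p - 2 * u p * dz (dz y) p := by
  simp (disch := fun_prop) only [dz_fun_sub, dz_fun_mul, dz_const]
  ring

theorem dz_dz_evolution_rhs (hu : AnalyticAt ℂ u p) (hy : AnalyticAt ℂ y p) :
    dz (fun q => dz (dz u) q * y q - dz u q * dz y q - 2 * u q * dz (dz y) q) p
      = dz (dz (dz u)) p * y p - 3 * dz u p * dz (dz y) p - 2 * u p * dz (dz (dz y)) p := by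
  simp (disch := fun_prop) only [dz_fun_sub, dz_fun_mul, dz_const]
  ring

variable (hΩ : IsOpen Ω) (hu : AnalyticOnNhd ℂ u Ω) (hy : AnalyticOnNhd ℂ y Ω)
include hΩ hu hy

theorem dz_dz_dt_of_evolution
    (hJ : EqOn (dt y) (fun q => dz u q * y q - 2 * u q * dz y q) Ω) (hp : p ∈ Ω) :
    dz (dz (dt y)) p
      = dz (dz (dz u)) p * y p - 3 * dz u p * dz (dz y) p - 2 * u p * dz (dz (dz y)) p := by
  have hJz : EqOn (dz (dt y))
      (fun q => dz (dz u) q * y q - dz u q * dz y q - 2 * u q * dz (dz y) q) Ω :=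
    fun q hq => (hJ.dz hΩ hq).trans (dz_evolution_rhs (hu q hq) (hy q hq))
  exact (hJz.dz hΩ hp).trans (dz_dz_evolution_rhs (hu p hp) (hy p hp))

variable (hS : EqOn (dz (dz y)) (fun q => -(u q * y q)) Ω) (hp : p ∈ Ω)
include hS hp

theorem dz_dz_dz_of_schrodinger : dz (dz (dz y)) p = -(dz u p * y p + u p * dz y p) := by
  rw [hS.dz hΩ hp, dz_fun_neg, dz_fun_mul (hu p hp).differentiableAt (hy p hp).differentiableAt]

theorem dt_dz_dz_of_schrodinger : dt (dz (dz y)) p = -(dt u p * y p + u p * dt y p) := by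
  rw [hS.dt hΩ hp, dt_fun_neg, dt_fun_mul (hu p hp).differentiableAt (hy p hp).differentiableAt]

end Schrodinger

/-- If a nowhere-zero holomorphic `y(z,t)` satisfies the evolution equation
`∂y/∂t = u' y − 2 u y'` where `u = −y''/y` (so `y'' + u y = 0`), then `u` satisfies
the KdV equation `∂u/∂t = −u''' − 6 u u'`. -/
theorem kdv_from_schrodinger_evolution
    (Ω : Set (ℂ × ℂ)) (hΩ : IsOpen Ω) (y : ℂ × ℂ → ℂ)
    (hy : AnalyticOnNhd ℂ y Ω) (hy0 : ∀ p ∈ Ω, y p ≠ 0)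
    (hJ : ∀ p ∈ Ω,
      dt y p = dz (schrodingerPotential y) p * y p
        - 2 * schrodingerPotential y p * dz y p) :
    ∀ p ∈ Ω,
      dt (schrodingerPotential y) p
        = -(dz (dz (dz (schrodingerPotential y))) p)
          - 6 * schrodingerPotential y p * dz (schrodingerPotential y) p := by
  intro p hp
  set u := schrodingerPotential y
  have hu : AnalyticOnNhd ℂ u Ω := fun q hq => (hy q hq).schrodingerPotential (hy0 q hq)
  have hS : EqOn (dz (dz y)) (fun q => -(u q * y q)) Ω :=
    fun q hq => dz_dz_eq_neg_schrodingerPotential_mul (hy0 q hq)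
  have key := dt_dz_dz_eq_dz_dz_dt hΩ hy hp
  rw [dt_dz_dz_of_schrodinger hΩ hu hy hS hp, dz_dz_dt_of_evolution hΩ hu hy hJ hp,
    dz_dz_dz_of_schrodinger hΩ hu hy hS hp, hS hp, hJ p hp] at key
  refine mul_right_cancel₀ (hy0 p hp) ?_
  linear_combination -key
end
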